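/- Let H be a complex separable Hilbert space, let z be a bounded self-adjoint operator on H with ‖z‖ ≤ π, let 0 < ε < π be such that neither ε nor −ε belongs to the spectrum of z, and let p = E_z((−ε, ε)) be the spectral projection of z corresponding to the interval (−ε, ε). Then the operator (1 − p) + p e^{iz} has spectrum contained in ℂ minus the ray (−∞, 0], and its logarithm via the principal branch (defined by holomorphic functional calculus) satisfies log((1 − p) + p e^{iz}) = i z p. -/

import Mathlib

/-! The spectrum of `z` is real and, since `±ε ∉ σ(z)`, the indicator `χ` of `(-ε, ε)` is
continuous on it, so the continuous functional calculus gives `(1 - p) + p e^{iz} = F(z)` with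
`F t = e^{it}` on `(-ε, ε)` and `F t = 1` elsewhere. As `ε < π`, `F` maps `σ(z)` into the slit
plane, where `log` is continuous and `log (F t) = i t χ(t)`; spectral mapping and the composition
rule of the functional calculus give both claims. -/

noncomputable section

/-- The spectral projection `E_z((-ε, ε))` of a self-adjoint operator `z` associated to
the interval `(-ε, ε)`, obtained by applying the functional calculus to the indicator
function of `(-ε, ε)` (which is continuous on the spectrum when `±ε ∉ σ(z)`). -/
def spectralProjIoo {H : Type*} [NormedAddCommGroup H] [InnerProductSpace ℂ H]
    [CompleteSpace H] (z : H →L[ℂ] H) (ε : ℝ) : H →L[ℂ] H :=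
  cfc (fun t : ℝ => if t ∈ Set.Ioo (-ε) ε then (1 : ℝ) else 0) z

open Set Complex
open scoped Real

lemma continuousOn_ite_mem_Ioo {X β : Type*} [TopologicalSpace X] [TopologicalSpace β]
    {φ : X → ℝ} (hφ : Continuous φ) {s : Set X} {a b : ℝ} (ha : ∀ x ∈ s, φ x ≠ a)
    (hb : ∀ x ∈ s, φ x ≠ b) {f g : X → β} (hf : ContinuousOn f s) (hg : ContinuousOn g s) :
    ContinuousOn (fun x => if φ x ∈ Ioo a b then f x else g x) s := by
  refine ContinuousOn.if ?_ (hf.mono inter_subset_left) (hg.mono inter_subset_left)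
  rintro x ⟨hxs, hxf⟩
  have hφx : φ x ∈ frontier (Ioo a b) := hφ.frontier_preimage_subset _ hxf
  rcases lt_or_ge a b with hab | hba
  · rw [frontier_Ioo hab] at hφx
    rcases hφx with h | h
    exacts [absurd h (ha x hxs), absurd h (hb x hxs)]
  · simp [Ioo_eq_empty_of_le hba] at hφx

lemma Complex.compl_slitPlane : slitPlaneᶜ = {w : ℂ | w.im = 0 ∧ w.re ≤ 0} := by
  ext w
  simp [mem_slitPlane_iff, and_comm]

lemma ite_mem_Ioo_exp_I_mul_mem_slitPlane {ε t : ℝ} (hε : ε ≤ π) :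
    (if t ∈ Ioo (-ε) ε then exp (I * t) else 1) ∈ slitPlane := by
  split_ifs with ht
  · have him : (I * t).im ∈ Ioo (-π) π := by simpa using Ioo_subset_Ioo (neg_le_neg hε) hε ht
    exact expOpenPartialHomeomorph.map_source him
  · exact one_mem_slitPlane

lemma log_ite_mem_Ioo_exp_I_mul {ε t : ℝ} (hε : ε ≤ π) :
    log (if t ∈ Ioo (-ε) ε then exp (I * t) else 1) =
      I * (t * ((if t ∈ Ioo (-ε) ε then (1 : ℝ) else 0 : ℝ) : ℂ)) := by
  split_ifs with ht
  · have htπ : t ∈ Ioo (-π) π := Ioo_subset_Ioo (neg_le_neg hε) hε ht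
    simpa using log_exp (by simpa using htπ.1) (by simpa using htπ.2.le)
  · simp

section CStarAlgebra

variable {A : Type*} [CStarAlgebra A]

lemma IsSelfAdjoint.continuousOn_ofReal_comp_re {a : A} (ha : IsSelfAdjoint a) {f : ℝ → ℝ}
    (hf : ContinuousOn f (spectrum ℝ a)) :
    ContinuousOn (fun w : ℂ => (f w.re : ℂ)) (spectrum ℂ a) :=
  (continuous_ofReal.comp_continuousOn hf).comp continuous_re.continuousOn
    fun _ hw => ha.spectrumRestricts.apply_mem hw

lemma IsSelfAdjoint.forall_mem_spectrum_complex {a : A} (ha : IsSelfAdjoint a) {P : ℂ → Prop}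
    (h : ∀ t ∈ spectrum ℝ a, P t) : ∀ w ∈ spectrum ℂ a, P w := by
  rw [← ha.spectrumRestricts.algebraMap_image]
  rintro _ ⟨t, ht, rfl⟩
  exact h t ht

lemma exp_I_smul_eq_cfc (a : A) (ha : IsStarNormal a := by cfc_tac) :
    NormedSpace.exp (I • a) = cfc (fun w => exp (I * w)) a := by
  rw [← CFC.complex_exp_eq_normedSpace_exp, ← cfc_comp_smul I exp a]
  rfl

lemma cfc_log_cfc {f : ℂ → ℂ} {a : A} (hf : ContinuousOn f (spectrum ℂ a))
    (hslit : MapsTo f (spectrum ℂ a) slitPlane) (ha : IsStarNormal a := by cfc_tac) :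
    cfc log (cfc f a) = cfc (fun w => log (f w)) a := by
  refine (cfc_comp' log f a ?_ hf).symm
  rintro _ ⟨w, hw, rfl⟩
  exact (continuousAt_clog (hslit hw)).continuousWithinAt

lemma IsSelfAdjoint.cfc_ite_re_mem {a : A} (ha : IsSelfAdjoint a) {U : Set ℝ}
    [DecidablePred (· ∈ U)]
    (hU : ContinuousOn (fun t : ℝ => if t ∈ U then (1 : ℝ) else 0) (spectrum ℝ a))
    {g : ℂ → ℂ} (hg : ContinuousOn g (spectrum ℂ a)) :
    cfc (fun w : ℂ => if w.re ∈ U then g w else 1) a =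
      (1 - cfc (fun t : ℝ => if t ∈ U then (1 : ℝ) else 0) a) +
        cfc (fun t : ℝ => if t ∈ U then (1 : ℝ) else 0) a * cfc g a := by
  have hUℂ := ha.continuousOn_ofReal_comp_re hU
  rw [cfc_real_eq_complex _ ha, ← cfc_one ℂ a, ← cfc_sub .., ← cfc_mul .., ← cfc_add ..]
  refine cfc_congr fun w _ => ?_
  split_ifs <;> simp

end CStarAlgebra

theorem log_of_one_sub_proj_add_proj_exp_general
    {H : Type*} [NormedAddCommGroup H] [InnerProductSpace ℂ H]
    [CompleteSpace H]
    (z : H →L[ℂ] H) (hzsa : IsSelfAdjoint z)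
    (ε : ℝ) (hεπ : ε < Real.pi)
    (hε : (ε : ℝ) ∉ spectrum ℝ z) (hε' : (-ε : ℝ) ∉ spectrum ℝ z) :
    spectrum ℂ ((1 - spectralProjIoo z ε) +
        spectralProjIoo z ε * NormedSpace.exp (Complex.I • z)) ∩
      {w : ℂ | w.im = 0 ∧ w.re ≤ 0} = ∅ ∧
    cfc Complex.log
        ((1 - spectralProjIoo z ε) +
          spectralProjIoo z ε * NormedSpace.exp (Complex.I • z)) =
      Complex.I • (z * spectralProjIoo z ε) := by
  have hre {w} (hw : w ∈ spectrum ℂ z) : w.re ∈ spectrum ℝ z := hzsa.spectrumRestricts.apply_mem hw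
  have hχ : ContinuousOn (fun t : ℝ => if t ∈ Ioo (-ε) ε then (1 : ℝ) else 0) (spectrum ℝ z) :=
    continuousOn_ite_mem_Ioo continuous_id (fun _ ht => ne_of_mem_of_not_mem ht hε')
      (fun _ ht => ne_of_mem_of_not_mem ht hε) continuousOn_const continuousOn_const
  set F : ℂ → ℂ := fun w => if w.re ∈ Ioo (-ε) ε then exp (I * w) else 1
  have hFcont : ContinuousOn F (spectrum ℂ z) :=
    continuousOn_ite_mem_Ioo continuous_re (fun _ hw => ne_of_mem_of_not_mem (hre hw) hε')
      (fun _ hw => ne_of_mem_of_not_mem (hre hw) hε) (by fun_prop) continuousOn_const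
  have hop : (1 - spectralProjIoo z ε) + spectralProjIoo z ε * NormedSpace.exp (I • z) =
      cfc F z := by
    rw [exp_I_smul_eq_cfc z, hzsa.cfc_ite_re_mem hχ (by fun_prop)]
    rfl
  have hFslit : MapsTo F (spectrum ℂ z) slitPlane :=
    hzsa.forall_mem_spectrum_complex fun _ _ => ite_mem_Ioo_exp_I_mul_mem_slitPlane hεπ.le
  have hlogF : (spectrum ℂ z).EqOn (fun w => log (F w))
      (fun w => I * (w * ((if w.re ∈ Ioo (-ε) ε then (1 : ℝ) else 0 : ℝ) : ℂ))) :=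
    hzsa.forall_mem_spectrum_complex fun _ _ => log_ite_mem_Ioo_exp_I_mul hεπ.le
  refine ⟨?_, ?_⟩
  · rw [hop, cfc_map_spectrum F z, ← compl_slitPlane]
    exact hFslit.image_subset.disjoint_compl_right.inter_eq
  · have hχℂ := hzsa.continuousOn_ofReal_comp_re hχ
    rw [hop, cfc_log_cfc hFcont hFslit, cfc_congr hlogF, cfc_const_mul .., cfc_mul ..,
      cfc_id' ℂ z, spectralProjIoo, cfc_real_eq_complex _ hzsa]

/-- Let `z` be a bounded self-adjoint operator with `‖z‖ ≤ π`, let `0 < ε < π` with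
`±ε ∉ σ(z)`, and let `p = E_z((-ε, ε))` be the corresponding spectral projection.
Then the operator `(1 - p) + p e^{iz}` has spectrum disjoint from the ray `(-∞, 0]`,
and its principal-branch logarithm (via functional calculus) equals `i z p`. -/
theorem log_of_one_sub_proj_add_proj_exp
    {H : Type*} [NormedAddCommGroup H] [InnerProductSpace ℂ H]
    [CompleteSpace H] [TopologicalSpace.SeparableSpace H]
    (z : H →L[ℂ] H) (hzsa : IsSelfAdjoint z) (hznorm : ‖z‖ ≤ Real.pi)
    (ε : ℝ) (hε0 : 0 < ε) (hεπ : ε < Real.pi)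
    (hε : (ε : ℝ) ∉ spectrum ℝ z) (hε' : (-ε : ℝ) ∉ spectrum ℝ z) :
    spectrum ℂ ((1 - spectralProjIoo z ε) +
        spectralProjIoo z ε * NormedSpace.exp (Complex.I • z)) ∩
      {w : ℂ | w.im = 0 ∧ w.re ≤ 0} = ∅ ∧
    cfc Complex.log
        ((1 - spectralProjIoo z ε) +
          spectralProjIoo z ε * NormedSpace.exp (Complex.I • z)) =
      Complex.I • (z * spectralProjIoo z ε) :=
  log_of_one_sub_proj_add_proj_exp_general z hzsa ε hεπ hε hε'

end
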